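/- arXiv:2309.08512 — 3 statements merged into one kernel-verified Lean document; each statement's English description precedes it below -/
import Mathlib

section
/- Let G be a finite group and let B ∈ (ℤ≥0[G])^{V×V} be a matrix such that B^ℓ ∈ u_G·(ℤ≥0)^{V×V} for some ℓ ∈ ℕ. Then the matrices ℰ(B) and 𝒜(B) are shift equivalent over ℤ≥0 with lag ℓ: explicitly, setting R := I_{V×V} ⊗ 𝟙_G^⊤ (the V×(V×G) matrix with R_{i,(j,g)} = δ_{ij}) and S := π_1(B^ℓ) ⊗ 𝟙_G (the (V×G)×V matrix with S_{(i,g),j} = π_1(B^ℓ)_{i,j}), one has 𝒜(B)^ℓ = RS, ℰ(B)^ℓ = SR, 𝒜(B)·R = R·ℰ(B), and S·𝒜(B) = ℰ(B)·S. -/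
open MonoidAlgebra Matrix

noncomputable def extMat {G V : Type*} [Group G]
    (B : Matrix V V (MonoidAlgebra ℤ G)) : Matrix (V × G) (V × G) ℤ :=
  fun p q => (B p.1 q.1).coeff (p.2⁻¹ * q.2)

noncomputable def augMat {G V : Type*} [Group G] [Fintype G]
    (B : Matrix V V (MonoidAlgebra ℤ G)) : Matrix V V ℤ :=
  fun i j => ∑ g : G, (B i j).coeff g

noncomputable def uG (G : Type*) [Group G] [Fintype G] : MonoidAlgebra ℤ G :=
  ∑ g : G, single g 1

/-!
ℰ and 𝒜 are the entrywise extensions of the regular representation and of the augmentation of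
ℤ[G], so both are ring homomorphisms and commute with powers. The relations 𝒜(B) R = R ℰ(B) and
ℰ(B) Rᵀ = Rᵀ 𝒜(B) hold for every B. If B^ℓ = C·u_G, then S = Rᵀ C, ℰ(B^ℓ) = Rᵀ C R and
𝒜(B^ℓ) = |G| C = R Rᵀ C; finally C commutes with 𝒜(B) because |G| C = 𝒜(B)^ℓ does and integer
matrices are torsion-free.
-/

namespace MonoidAlgebra

variable {k G : Type*} [Group G] [Fintype G]

lemma coeff_mul_eq_sum [Semiring k] (f h : MonoidAlgebra k G) (x : G) :
    (f * h).coeff x = ∑ a, f.coeff a * h.coeff (a⁻¹ * x) := by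
  rw [coeff_mul_apply_left, Finsupp.sum_fintype]
  simp

variable (k G) in
noncomputable def regularRep [Semiring k] [DecidableEq G] :
    MonoidAlgebra k G →+* Matrix G G k where
  toFun f := Matrix.of fun x y => f.coeff (x⁻¹ * y)
  map_zero' := rfl
  map_add' _ _ := rfl
  map_one' := by
    ext x y
    simp [one_def, Finsupp.single_apply, one_apply, inv_mul_eq_one, eq_comm]
  map_mul' f h := by
    ext x y
    rw [Matrix.of_apply, coeff_mul_eq_sum, Matrix.mul_apply]
    refine Fintype.sum_equiv (Equiv.mulLeft x) _ _ fun a => ?_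
    simp [mul_assoc]

variable (k G) in
noncomputable def augmentation [CommSemiring k] : MonoidAlgebra k G →ₐ[k] k := lift k k G 1

lemma augmentation_apply [CommSemiring k] (f : MonoidAlgebra k G) :
    augmentation k G f = ∑ g, f.coeff g := by
  rw [augmentation, lift_apply, Finsupp.sum_fintype] <;> simp

end MonoidAlgebra

lemma coeff_smul_uG {G : Type*} [Group G] [Fintype G] (c : ℤ) (g : G) :
    (c • uG G).coeff g = c := by
  rw [coeff_smul_apply, uG, coeff_sum, Finsupp.finsetSum_apply]
  simp

section RingHom

variable {G V : Type*} [Group G] [Fintype G] [Fintype V] [DecidableEq V]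

lemma extMat_eq_comp [DecidableEq G] (B : Matrix V V (MonoidAlgebra ℤ G)) :
    extMat B = compRingEquiv V G ℤ ((regularRep ℤ G).mapMatrix B) := rfl

lemma extMat_pow [DecidableEq G] (B : Matrix V V (MonoidAlgebra ℤ G)) (n : ℕ) :
    extMat (B ^ n) = extMat B ^ n := by
  simp only [extMat_eq_comp, map_pow]

lemma augMat_eq_map (B : Matrix V V (MonoidAlgebra ℤ G)) :
    augMat B = (augmentation ℤ G : MonoidAlgebra ℤ G →+* ℤ).mapMatrix B := by
  ext i j
  simp [augMat, augmentation_apply]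

lemma augMat_pow (B : Matrix V V (MonoidAlgebra ℤ G)) (n : ℕ) :
    augMat (B ^ n) = augMat B ^ n := by
  simp only [augMat_eq_map, map_pow]

end RingHom

/-- The matrix `R = I ⊗ 𝟙_Gᵀ` of the projection `V × G → V`. -/
def fstMat (V G : Type*) [DecidableEq V] : Matrix V (V × G) ℤ :=
  fun i p => if p.1 = i then 1 else 0

section Intertwining

variable {G V : Type*} [Group G] [Fintype G] [Fintype V] [DecidableEq V]

lemma augMat_mul_fstMat (B : Matrix V V (MonoidAlgebra ℤ G)) :
    augMat B * fstMat V G = fstMat V G * extMat B := by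
  ext i q
  simp only [Matrix.mul_apply, augMat, fstMat, extMat, Fintype.sum_prod_type, mul_ite, ite_mul,
    mul_one, one_mul, mul_zero, zero_mul, Finset.sum_ite_eq, Finset.sum_ite_eq', Finset.mem_univ,
    Finset.sum_ite_irrel, Finset.sum_const_zero, ↓reduceIte]
  exact (((Equiv.inv G).trans (Equiv.mulRight q.2)).sum_comp _).symm

lemma extMat_mul_fstMat_transpose (B : Matrix V V (MonoidAlgebra ℤ G)) :
    extMat B * (fstMat V G)ᵀ = (fstMat V G)ᵀ * augMat B := by
  ext p j
  simp only [Matrix.mul_apply, transpose_apply, augMat, fstMat, extMat, Fintype.sum_prod_type,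
    mul_ite, ite_mul, mul_one, one_mul, mul_zero, zero_mul, Finset.sum_ite_eq, Finset.sum_ite_eq',
    Finset.mem_univ, Finset.sum_ite_irrel, Finset.sum_const_zero, ↓reduceIte]
  exact Equiv.sum_comp (Equiv.mulLeft p.2⁻¹) fun g => (B p.1 j).coeff g

lemma fstMat_mul_transpose :
    fstMat V G * (fstMat V G)ᵀ = (Fintype.card G : ℤ) • (1 : Matrix V V ℤ) := by
  ext i j
  simp [Matrix.mul_apply, fstMat, Fintype.sum_prod_type, one_apply, eq_comm, apply_ite]

end Intertwining

section ConstantCoefficients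

variable {G V : Type*} [Group G] {C : Matrix V V ℤ}

lemma augMat_eq_card_smul [Fintype G] {P : Matrix V V (MonoidAlgebra ℤ G)}
    (hP : ∀ i j g, (P i j).coeff g = C i j) : augMat P = (Fintype.card G : ℤ) • C := by
  ext i j
  simp [augMat, hP]

lemma extMat_eq_fstMat_transpose_mul [Fintype V] [DecidableEq V]
    {P : Matrix V V (MonoidAlgebra ℤ G)} (hP : ∀ i j g, (P i j).coeff g = C i j) :
    extMat P = (fstMat V G)ᵀ * C * fstMat V G := by
  ext p q
  simp [extMat, hP, Matrix.mul_apply, fstMat]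

lemma commute_augMat_of_pow [Fintype G] [DecidableEq G] [Fintype V] [DecidableEq V]
    {B : Matrix V V (MonoidAlgebra ℤ G)} {ℓ : ℕ}
    (hP : ∀ i j g, ((B ^ ℓ) i j).coeff g = C i j) : Commute C (augMat B) := by
  have hcard : (Fintype.card G : ℤ) ≠ 0 := by positivity
  have h := (Commute.refl (augMat B)).pow_left ℓ
  rw [← augMat_pow, augMat_eq_card_smul hP] at h
  refine smul_right_injective _ hcard ?_
  simpa only [smul_mul_assoc, mul_smul_comm] using h.eq

end ConstantCoefficients

theorem ext_shift_equivalent_aug_general {G V : Type*} [Group G] [Fintype G]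
    [DecidableEq G] [Fintype V] [DecidableEq V]
    (B : Matrix V V (MonoidAlgebra ℤ G))
    (ℓ : ℕ) (hℓ : ∀ i j, ∃ c : ℤ, 0 ≤ c ∧ (B ^ ℓ) i j = c • uG G) :
    let R : Matrix V (V × G) ℤ := fun i p => if p.1 = i then 1 else 0
    let S : Matrix (V × G) V ℤ := fun p j => ((B ^ ℓ) p.1 j).coeff (1 : G)
    (augMat B) ^ ℓ = R * S ∧ (extMat B) ^ ℓ = S * R ∧
      (augMat B) * R = R * (extMat B) ∧ S * (augMat B) = (extMat B) * S := by
  intro R S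
  let C : Matrix V V ℤ := Matrix.of fun i j => ((B ^ ℓ) i j).coeff 1
  have hP : ∀ i j g, ((B ^ ℓ) i j).coeff g = C i j := fun i j g => by
    obtain ⟨c, -, hc⟩ := hℓ i j
    simp only [C, Matrix.of_apply, hc, coeff_smul_uG]
  have hR : R = fstMat V G := rfl
  have hS : S = (fstMat V G)ᵀ * C := by
    ext p j
    simp [S, hP, Matrix.mul_apply, fstMat]
  refine ⟨?_, ?_, augMat_mul_fstMat B, ?_⟩
  · rw [← augMat_pow, augMat_eq_card_smul hP, hR, hS, ← Matrix.mul_assoc, fstMat_mul_transpose,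
      smul_mul_assoc, Matrix.one_mul]
  · rw [← extMat_pow, extMat_eq_fstMat_transpose_mul hP, hR, hS]
  · rw [hS, Matrix.mul_assoc, (commute_augMat_of_pow hP).eq, ← Matrix.mul_assoc,
      ← extMat_mul_fstMat_transpose, Matrix.mul_assoc]

theorem ext_shift_equivalent_aug {G V : Type*} [Group G] [Fintype G]
    [DecidableEq G] [Fintype V] [DecidableEq V]
    (B : Matrix V V (MonoidAlgebra ℤ G))
    (hpos : ∀ i j (g : G), 0 ≤ (B i j).coeff g)
    (ℓ : ℕ) (hℓ : ∀ i j, ∃ c : ℤ, 0 ≤ c ∧ (B ^ ℓ) i j = c • uG G) :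
    let R : Matrix V (V × G) ℤ := fun i p => if p.1 = i then 1 else 0
    let S : Matrix (V × G) V ℤ := fun p j => ((B ^ ℓ) p.1 j).coeff (1 : G)
    (augMat B) ^ ℓ = R * S ∧ (extMat B) ^ ℓ = S * R ∧
      (augMat B) * R = R * (extMat B) ∧ S * (augMat B) = (extMat B) * S :=
  ext_shift_equivalent_aug_general B ℓ hℓ
end

section
/- Let G be a finite group acting by graph automorphisms on a finite directed graph with adjacency matrix A ∈ ℤ≥0^{V×V} (so A_{g·i,g·j} = A_{i,j}). The induced action on the dimension group (the direct limit of ℤ^V → ℤ^V under right multiplication by A) is trivial if and only if there exists ℓ ∈ ℕ such that (A^ℓ)_{i,j} = (A^ℓ)_{i,g·j} for all g ∈ G and i, j ∈ V. -/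
/-!
Since `A` is `G`-invariant, `w ↦ w A^ℓ` is `G`-equivariant, so the action is trivial on `D_A`
exactly when every `w A^ℓ` is eventually `g`-fixed; once `g`-fixed, `w A^ℓ` stays so at all
higher powers. On the basis vector `eᵢ` this is the statement about row `i` of `A^ℓ`, and
finiteness of `G × V` makes the threshold `ℓ` uniform. Conversely, `g`-fixed rows make every
`w A^ℓ` `g`-fixed.
-/

open Matrix Filter

section
variable {G V R : Type*} [Group G] [MulAction G V] [Fintype V] [Semiring R]

theorem Matrix.pow_apply_smul_smul [DecidableEq V] {A : Matrix V V R}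
    (hA : ∀ (g : G) (i j : V), A (g • i) (g • j) = A i j) (n : ℕ) (g : G) (i j : V) :
    (A ^ n) (g • i) (g • j) = (A ^ n) i j := by
  have hg : reindex (MulAction.toPerm g).symm (MulAction.toPerm g).symm A = A := by
    ext i j; exact hA g i j
  have := congrFun₂ (map_pow (reindexRingEquiv R (MulAction.toPerm g).symm) A n) i j
  rwa [coe_reindexRingEquiv, hg] at this

theorem Matrix.vecMul_comp_inv_smul {M : Matrix V V R}
    (hM : ∀ (g : G) (i j : V), M (g • i) (g • j) = M i j) (w : V → R) (g : G) :
    (fun i => w (g⁻¹ • i)) ᵥ* M = fun j => (w ᵥ* M) (g⁻¹ • j) := by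
  funext j
  refine Fintype.sum_equiv (MulAction.toPerm g⁻¹) _ _ fun i => ?_
  simp [← hM g⁻¹ i j]

theorem Matrix.vecMul_apply_smul_of_apply_smul {M : Matrix V V R}
    (hM : ∀ (g : G) (i j : V), M (g • i) (g • j) = M i j) {x : V → R} {g : G}
    (hx : ∀ j, x j = x (g • j)) (j : V) : (x ᵥ* M) j = (x ᵥ* M) (g • j) := by
  simpa only [inv_inv, ← hx] using congrFun (vecMul_comp_inv_smul hM x g⁻¹) j

theorem Matrix.eventually_vecMul_pow_apply_smul [DecidableEq V] {A : Matrix V V R}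
    (hA : ∀ (g : G) (i j : V), A (g • i) (g • j) = A i j) {w : V → R} {g : G}
    (h : ∃ ℓ : ℕ, ∀ j, (w ᵥ* A ^ ℓ) j = (w ᵥ* A ^ ℓ) (g • j)) :
    ∀ᶠ ℓ in atTop, ∀ j, (w ᵥ* A ^ ℓ) j = (w ᵥ* A ^ ℓ) (g • j) := by
  obtain ⟨ℓ, hℓ⟩ := h
  filter_upwards [eventually_ge_atTop ℓ] with m hm
  obtain ⟨k, rfl⟩ := Nat.exists_eq_add_of_le hm
  rw [pow_add, ← vecMul_vecMul]
  exact vecMul_apply_smul_of_apply_smul (pow_apply_smul_smul hA k) hℓ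

end

theorem dimension_action_trivial_iff_general {G V : Type*} [Group G] [Fintype G]
    [Fintype V] [DecidableEq V] [MulAction G V]
    (A : Matrix V V ℤ)
    (hAinv : ∀ (g : G) (i j : V), A (g • i) (g • j) = A i j) :
    (∀ (w : V → ℤ) (g : G), ∃ ℓ : ℕ,
        Matrix.vecMul w (A ^ ℓ) = Matrix.vecMul (fun i => w (g⁻¹ • i)) (A ^ ℓ))
      ↔ ∃ ℓ : ℕ, ∀ (g : G) (i j : V), (A ^ ℓ) i j = (A ^ ℓ) i (g • j) := by
  simp_rw [vecMul_comp_inv_smul (pow_apply_smul_smul hAinv _), funext_iff]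
  constructor
  · intro h
    have hrow (g : G) (i : V) : ∀ᶠ ℓ in atTop, ∀ j, (A ^ ℓ) i j = (A ^ ℓ) i (g • j) := by
      simpa using eventually_vecMul_pow_apply_smul (w := Pi.single i 1) hAinv
        (by simpa using h (Pi.single i 1) g⁻¹)
    exact (eventually_all.2 fun g => eventually_all.2 (hrow g)).exists
  · rintro ⟨ℓ, hℓ⟩ w g
    exact ⟨ℓ, fun j => by simp only [vecMul, dotProduct, hℓ g⁻¹ _ j]⟩

/-- Inertness of a free action by graph automorphisms.  Triviality of the
induced action on the dimension group `D_A = lim (ℤ^V →^A ℤ^V → ⋯)` unwinds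
to: for every `w ∈ ℤ^V` and `g ∈ G` there is `ℓ` with `wA^ℓ = (g·w)A^ℓ`,
where `(g·w)_i = w_{g⁻¹·i}`. -/
theorem dimension_action_trivial_iff {G V : Type*} [Group G] [Fintype G]
    [Fintype V] [DecidableEq V] [MulAction G V]
    (hfree : ∀ g : G, g ≠ 1 → ∀ v : V, g • v ≠ v)
    (A : Matrix V V ℤ) (hApos : ∀ i j, 0 ≤ A i j)
    (hAinv : ∀ (g : G) (i j : V), A (g • i) (g • j) = A i j) :
    (∀ (w : V → ℤ) (g : G), ∃ ℓ : ℕ,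
        Matrix.vecMul w (A ^ ℓ) = Matrix.vecMul (fun i => w (g⁻¹ • i)) (A ^ ℓ))
      ↔ ∃ ℓ : ℕ, ∀ (g : G) (i j : V), (A ^ ℓ) i j = (A ^ ℓ) i (g • j) :=
  dimension_action_trivial_iff_general A hAinv
end

section
/- Let G be a finite group, and let A be an irreducible square matrix over ℤ≥0[G] indexed by V. For i ∈ V, define W_i(A) := {g ∈ G : ∃ n ∈ ℕ, π_g((A^n)_{i,i}) > 0}. Then W_i(A) is a subgroup of G, and for any i, j ∈ V the subgroups W_i(A) and W_j(A) are conjugate in G. -/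
/-!
Since all coefficients are nonnegative, no cancellation occurs when multiplying powers of `A`:
the positive coefficients of `(A ^ n) i j` are exactly the weights of walks of length `n` from
`i` to `j`, and concatenating walks multiplies their weights. Hence `W_i(A)` is a submonoid of
the finite group `G`, so a subgroup. By irreducibility there are walks `i → j` and `j → i`, of
weights `c` and `d` say; for `g ∈ W_j(A)` both `c g d` and `c d` lie in `W_i(A)`, hence so does
`c g d (c d)⁻¹ = c g c⁻¹`, and symmetrically.
-/

open MonoidAlgebra Matrix

namespace MonoidAlgebra

variable {R M : Type*} [Semiring R] [PartialOrder R]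

lemma exists_coeff_pos {x : R[M]} (hx : ∀ m, 0 ≤ x.coeff m) (h : x ≠ 0) :
    ∃ m, 0 < x.coeff m := by
  obtain ⟨m, hm⟩ := Finsupp.ne_iff.1 (coeff_eq_zero.not.2 h)
  exact ⟨m, (hx m).lt_of_ne' hm⟩

variable [IsOrderedRing R]

lemma coeff_mul_nonneg [Mul M] {x y : R[M]} (hx : ∀ m, 0 ≤ x.coeff m) (hy : ∀ m, 0 ≤ y.coeff m)
    (m : M) : 0 ≤ (x * y).coeff m := by
  classical
  rw [coeff_mul]
  exact Finset.sum_nonneg fun a _ ↦ Finset.sum_nonneg fun b _ ↦ by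
    beta_reduce
    split_ifs
    exacts [mul_nonneg (hx a) (hy b), le_rfl]

lemma coeff_mul_coeff_le_coeff_mul [Mul M] {x y : R[M]} (hx : ∀ m, 0 ≤ x.coeff m)
    (hy : ∀ m, 0 ≤ y.coeff m) (a b : M) : x.coeff a * y.coeff b ≤ (x * y).coeff (a * b) := by
  classical
  by_cases ha : x.coeff a = 0
  · simpa [ha] using coeff_mul_nonneg hx hy (a * b)
  by_cases hb : y.coeff b = 0
  · simpa [hb] using coeff_mul_nonneg hx hy (a * b)
  set F : M → M → R := fun m₁ m₂ ↦ if m₁ * m₂ = a * b then x.coeff m₁ * y.coeff m₂ else 0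
  have hF : ∀ m₁ m₂, 0 ≤ F m₁ m₂ := fun m₁ m₂ ↦ by
    simp only [F]
    split_ifs
    exacts [mul_nonneg (hx m₁) (hy m₂), le_rfl]
  calc x.coeff a * y.coeff b = F a b := by simp [F]
    _ ≤ ∑ m₂ ∈ y.coeff.support, F a m₂ :=
      Finset.single_le_sum (fun m₂ _ ↦ hF a m₂) (Finsupp.mem_support_iff.2 hb)
    _ ≤ ∑ m₁ ∈ x.coeff.support, ∑ m₂ ∈ y.coeff.support, F m₁ m₂ :=
      Finset.single_le_sum (f := fun m₁ ↦ ∑ m₂ ∈ y.coeff.support, F m₁ m₂)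
        (fun m₁ _ ↦ Finset.sum_nonneg fun m₂ _ ↦ hF m₁ m₂) (Finsupp.mem_support_iff.2 ha)
    _ = (x * y).coeff (a * b) := (coeff_mul x y (a * b)).symm

variable (R M) in
def nonnegSubsemiring [Monoid M] : Subsemiring R[M] where
  carrier := {x | ∀ m, 0 ≤ x.coeff m}
  zero_mem' _ := le_rfl
  add_mem' hx hy m := add_nonneg (hx m) (hy m)
  one_mem' := Finsupp.single_nonneg.2 zero_le_one
  mul_mem' := coeff_mul_nonneg

end MonoidAlgebra

namespace Matrix

variable {R G V : Type*} [Semiring R] [PartialOrder R] [Fintype V] [DecidableEq V]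

section Monoid

variable [Monoid G]

def weights (A : Matrix V V R[G]) (i j : V) : Set G := {g | ∃ n, 0 < ((A ^ n) i j).coeff g}

variable [IsStrictOrderedRing R]

lemma coeff_pow_apply_nonneg {A : Matrix V V R[G]} (hA : ∀ i j g, 0 ≤ (A i j).coeff g)
    (n : ℕ) (i j : V) (g : G) : 0 ≤ ((A ^ n) i j).coeff g :=
  Subsemiring.pow_mem (R := Matrix V V R[G]) (nonnegSubsemiring R G).matrix (x := A)
    (fun i j ↦ hA i j) n i j g

lemma weights_nonempty_of_pow_apply_ne_zero {A : Matrix V V R[G]}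
    (hA : ∀ i j g, 0 ≤ (A i j).coeff g) {n : ℕ} {i j : V} (h : (A ^ n) i j ≠ 0) :
    (A.weights i j).Nonempty :=
  (exists_coeff_pos (coeff_pow_apply_nonneg hA n i j) h).imp fun _ hg ↦ ⟨n, hg⟩

lemma one_mem_weights (A : Matrix V V R[G]) (i : V) : (1 : G) ∈ A.weights i i :=
  ⟨0, by simp [one_def]⟩

lemma mul_mem_weights {A : Matrix V V R[G]} (hA : ∀ i j g, 0 ≤ (A i j).coeff g) {i j k : V}
    {g h : G} (hg : g ∈ A.weights i j) (hh : h ∈ A.weights j k) : g * h ∈ A.weights i k := by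
  obtain ⟨m, hm⟩ := hg
  obtain ⟨n, hn⟩ := hh
  refine ⟨m + n, (mul_pos hm hn).trans_le ?_⟩
  rw [pow_add, mul_apply, coeff_sum, Finsupp.finsetSum_apply]
  calc ((A ^ m) i j).coeff g * ((A ^ n) j k).coeff h
      ≤ ((A ^ m) i j * (A ^ n) j k).coeff (g * h) :=
        coeff_mul_coeff_le_coeff_mul (coeff_pow_apply_nonneg hA m i j)
          (coeff_pow_apply_nonneg hA n j k) g h
    _ ≤ ∑ l, ((A ^ m) i l * (A ^ n) l k).coeff (g * h) :=
      Finset.single_le_sum (f := fun l ↦ ((A ^ m) i l * (A ^ n) l k).coeff (g * h))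
        (fun l _ ↦ coeff_mul_nonneg (coeff_pow_apply_nonneg hA m i l)
          (coeff_pow_apply_nonneg hA n l k) _) (Finset.mem_univ j)

def weightSubmonoid {A : Matrix V V R[G]} (hA : ∀ i j g, 0 ≤ (A i j).coeff g) (i : V) :
    Submonoid G where
  carrier := A.weights i i
  one_mem' := one_mem_weights A i
  mul_mem' := mul_mem_weights hA

end Monoid

section Group

variable [Group G] [Finite G] [IsStrictOrderedRing R] {A : Matrix V V R[G]}
  (hA : ∀ i j g, 0 ≤ (A i j).coeff g)

def weightSubgroup (i : V) : Subgroup G where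
  __ := weightSubmonoid hA i
  inv_mem' {g} hg := (weightSubmonoid hA i).powers_le.2 hg
    (mem_powers_iff_mem_zpowers.2 (inv_mem (Subgroup.mem_zpowers g)))

lemma mul_mul_inv_mem_weightSubgroup {i j : V} {c d g : G} (hc : c ∈ A.weights i j)
    (hd : d ∈ A.weights j i) (hg : g ∈ weightSubgroup hA j) :
    c * g * c⁻¹ ∈ weightSubgroup hA i := by
  have hcgd : c * g * d ∈ weightSubgroup hA i :=
    mul_mem_weights hA (mul_mem_weights hA hc hg) hd
  have hcd : c * d ∈ weightSubgroup hA i := mul_mem_weights hA hc hd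
  convert mul_mem hcgd (inv_mem hcd) using 1
  group

lemma mem_weightSubgroup_iff_mul_mul_inv_mem {i j : V} {c d g : G} (hc : c ∈ A.weights i j)
    (hd : d ∈ A.weights j i) :
    g ∈ weightSubgroup hA j ↔ c * g * c⁻¹ ∈ weightSubgroup hA i := by
  refine ⟨mul_mul_inv_mem_weightSubgroup hA hc hd, fun h ↦ ?_⟩
  have hdc : d * c ∈ weightSubgroup hA j := mul_mem_weights hA hd hc
  convert mul_mem (mul_mem (inv_mem hdc) (mul_mul_inv_mem_weightSubgroup hA hd hc h)) hdc
    using 1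
  group

end Group

end Matrix

theorem weight_subgroup_and_conjugacy {G V : Type*} [Group G] [Fintype G]
    [Fintype V] [DecidableEq V]
    (A : Matrix V V (MonoidAlgebra ℤ G))
    (hpos : ∀ i j (g : G), 0 ≤ (A i j).coeff g)
    (hirr : ∀ i j, ∃ n : ℕ, (A ^ n) i j ≠ 0) :
    -- each weight set `W_i(A) = {g | ∃ n, π_g((A^n)_{i,i}) > 0}` is a subgroup
    (∀ i : V, ∃ Wi : Subgroup G,
        ∀ g : G, g ∈ Wi ↔ ∃ n : ℕ, 0 < ((A ^ n) i i).coeff g) ∧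
    -- and any two weight sets are conjugate in `G`
    (∀ i j : V, ∃ c : G, ∀ g : G,
        (∃ n : ℕ, 0 < ((A ^ n) j j).coeff g) ↔
          ∃ n : ℕ, 0 < ((A ^ n) i i).coeff (c⁻¹ * g * c)) := by
  refine ⟨fun i ↦ ⟨weightSubgroup hpos i, fun g ↦ Iff.rfl⟩, fun i j ↦ ?_⟩
  obtain ⟨c, hc⟩ := weights_nonempty_of_pow_apply_ne_zero hpos (hirr i j).choose_spec
  obtain ⟨d, hd⟩ := weights_nonempty_of_pow_apply_ne_zero hpos (hirr j i).choose_spec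
  refine ⟨c⁻¹, fun g ↦ ?_⟩
  rw [inv_inv]
  exact mem_weightSubgroup_iff_mul_mul_inv_mem hpos hc hd
end
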